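/- Let h_m: Q → [0,∞) be measurable functions on a set Q of finite measure with h_m → 0 a.e. in Q, where h_m = (S(A_m) − S(A)) : (A_m − A) with S(D) = |D|^{q-2}D strictly monotone (q > 1), and A_m, A measurable matrix fields. Then A_m → A a.e. in Q, and by continuity of S, S(A_m) → S(A) a.e. in Q. -/

import Mathlib

open MeasureTheory

/-- Frobenius inner product on 3×3 real matrices. -/
noncomputable def fdot (A B : Matrix (Fin 3) (Fin 3) ℝ) : ℝ := ∑ i, ∑ j, A i j * B i j

/-- Frobenius norm of a 3×3 real matrix. -/
noncomputable def fnorm (A : Matrix (Fin 3) (Fin 3) ℝ) : ℝ := Real.sqrt (∑ i, ∑ j, (A i j) ^ 2)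

/-- The power-law stress `S(D) = |D|^{q-2} D`, equal to `0` when `D = 0`. -/
noncomputable def stress (q : ℝ) (D : Matrix (Fin 3) (Fin 3) ℝ) : Matrix (Fin 3) (Fin 3) ℝ :=
  if D = 0 then 0 else (fnorm D) ^ (q - 2) • D

/-!
Write `t = |D|`, `s = |A|`. The duality product splits as
`(S D - S A) : (D - A) = (t^(q-1) - s^(q-1)) (t - s) + (t^(q-2) + s^(q-2)) (t s - D : A)`,
a sum of two nonnegative terms (monotonicity of `t ↦ t^(q-1)` and Cauchy–Schwarz). If it tends
to `0`, the first term forces `|A_m| → |A|` and the second `A_m : A → |A|²`, hence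
`|A_m - A|² = |A_m|² - 2 A_m : A + |A|² → 0`. The argument is pointwise and works in any real
inner product space; the Frobenius product is the Euclidean one after flattening the matrices.
-/

open Filter Topology Set
open scoped InnerProductSpace

lemma Real.rpow_sub_two_mul_self {t q : ℝ} (ht : 0 ≤ t) (hq : q ≠ 1) :
    t ^ (q - 2) * t = t ^ (q - 1) := by
  rw [← Real.rpow_add_one' ht (by contrapose! hq; linarith)]
  ring_nf

lemma strictMonoOn_rpow_sub_two_mul_self {q : ℝ} (hq : 1 < q) :
    StrictMonoOn (fun t : ℝ => t ^ (q - 2) * t) (Ici 0) := fun s hs t ht hst => by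
  simp only [Real.rpow_sub_two_mul_self (mem_Ici.1 hs) hq.ne',
    Real.rpow_sub_two_mul_self (mem_Ici.1 ht) hq.ne']
  exact Real.strictMonoOn_rpow_Ici_of_exponent_pos (sub_pos.2 hq) hs ht hst

lemma MonotoneOn.sub_mul_sub_nonneg {f : ℝ → ℝ} {s : Set ℝ} (hf : MonotoneOn f s)
    {a b : ℝ} (ha : a ∈ s) (hb : b ∈ s) : 0 ≤ (f a - f b) * (a - b) := by
  rcases le_total a b with h | h
  · exact mul_nonneg_of_nonpos_of_nonpos (sub_nonpos.2 (hf ha hb h)) (sub_nonpos.2 h)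
  · exact mul_nonneg (sub_nonneg.2 (hf hb ha h)) (sub_nonneg.2 h)

lemma tendsto_of_tendsto_mul_sub_of_strictMonoOn {ι : Type*} {l : Filter ι} {f : ℝ → ℝ}
    (hf : StrictMonoOn f (Ici 0)) {t : ι → ℝ} {s : ℝ} (ht : ∀ i, 0 ≤ t i) (hs : 0 ≤ s)
    (h : Tendsto (fun i => (f (t i) - f s) * (t i - s)) l (𝓝 0)) : Tendsto t l (𝓝 s) := by
  -- once `t i` leaves `(a, b)`, the product is at least its (positive) value at `a` or `b`
  rw [tendsto_order]
  constructor
  · intro a ha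
    rcases lt_or_ge a 0 with ha0 | ha0
    · exact Eventually.of_forall fun i => ha0.trans_le (ht i)
    have hpos : 0 < (f s - f a) * (s - a) :=
      mul_pos (sub_pos.2 (hf ha0 hs ha)) (sub_pos.2 ha)
    filter_upwards [h.eventually (gt_mem_nhds hpos)] with i hi
    by_contra! hle
    have hfle : f (t i) ≤ f a := hf.monotoneOn (ht i) ha0 hle
    nlinarith [mul_nonneg (sub_pos.2 (hf ha0 hs ha)).le (sub_nonneg.2 hle),
      mul_nonneg (sub_nonneg.2 hfle) (sub_pos.2 ha).le,
      mul_nonneg (sub_nonneg.2 hfle) (sub_nonneg.2 hle)]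
  · intro b hb
    have hb0 : 0 ≤ b := hs.trans hb.le
    have hpos : 0 < (f b - f s) * (b - s) :=
      mul_pos (sub_pos.2 (hf hs hb0 hb)) (sub_pos.2 hb)
    filter_upwards [h.eventually (gt_mem_nhds hpos)] with i hi
    by_contra! hle
    have hfle : f b ≤ f (t i) := hf.monotoneOn hb0 (ht i) hle
    nlinarith [mul_nonneg (sub_pos.2 (hf hs hb0 hb)).le (sub_nonneg.2 hle),
      mul_nonneg (sub_nonneg.2 hfle) (sub_pos.2 hb).le,
      mul_nonneg (sub_nonneg.2 hfle) (sub_nonneg.2 hle)]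

section NormedSpace

variable {F : Type*} [NormedAddCommGroup F] [NormedSpace ℝ F]

noncomputable def powerLaw (q : ℝ) (x : F) : F := ‖x‖ ^ (q - 2) • x

lemma norm_powerLaw {q : ℝ} (hq : q ≠ 1) (x : F) : ‖powerLaw q x‖ = ‖x‖ ^ (q - 1) := by
  rw [powerLaw, norm_smul, Real.norm_of_nonneg (by positivity),
    Real.rpow_sub_two_mul_self (norm_nonneg x) hq]

lemma continuous_powerLaw {q : ℝ} (hq : 1 < q) : Continuous (powerLaw (F := F) q) := by
  rw [continuous_iff_continuousAt]
  intro x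
  rcases eq_or_ne x 0 with rfl | hx
  · have h0 : Tendsto (fun y : F => ‖y‖ ^ (q - 1)) (𝓝 0) (𝓝 0) := by
      simpa [Function.comp_def, Real.zero_rpow (sub_pos.2 hq).ne'] using
        ((Real.continuousAt_rpow_const _ _ (Or.inr (sub_pos.2 hq).le)).tendsto.comp
          (continuous_norm.tendsto (0 : F)))
    rw [ContinuousAt, show powerLaw q (0 : F) = 0 by simp [powerLaw],
      tendsto_zero_iff_norm_tendsto_zero]
    simpa [norm_powerLaw hq.ne'] using h0
  · exact ((Real.continuousAt_rpow_const _ _ (Or.inl (norm_ne_zero_iff.2 hx))).comp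
      continuous_norm.continuousAt).smul continuousAt_id

end NormedSpace

section InnerProductSpace

variable {F : Type*} [NormedAddCommGroup F] [InnerProductSpace ℝ F] {ι : Type*} {l : Filter ι}

lemma tendsto_of_tendsto_norm_of_tendsto_inner {x : ι → F} {a : F}
    (hn : Tendsto (fun i => ‖x i‖) l (𝓝 ‖a‖))
    (hi : Tendsto (fun i => ⟪x i, a⟫_ℝ) l (𝓝 (‖a‖ ^ 2))) : Tendsto x l (𝓝 a) := by
  have hsq : Tendsto (fun i => ‖x i - a‖ ^ 2) l (𝓝 0) := by
    simp_rw [norm_sub_sq_real]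
    convert ((hn.pow 2).sub (hi.const_mul 2)).add_const (‖a‖ ^ 2) using 2
    ring
  rw [tendsto_iff_norm_sub_tendsto_zero]
  simpa [Real.sqrt_sq (norm_nonneg _)] using hsq.sqrt

lemma inner_powerLaw_sub_powerLaw (q : ℝ) (x a : F) :
    ⟪powerLaw q x - powerLaw q a, x - a⟫_ℝ =
      (‖x‖ ^ (q - 2) * ‖x‖ - ‖a‖ ^ (q - 2) * ‖a‖) * (‖x‖ - ‖a‖) +
        (‖x‖ ^ (q - 2) + ‖a‖ ^ (q - 2)) * (‖x‖ * ‖a‖ - ⟪x, a⟫_ℝ) := by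
  simp only [powerLaw, inner_sub_left, inner_sub_right, real_inner_smul_left,
    real_inner_self_eq_norm_sq, real_inner_comm x a]
  ring

theorem tendsto_of_tendsto_inner_powerLaw_sub {q : ℝ} (hq : 1 < q) {x : ι → F} {a : F}
    (h : Tendsto (fun i => ⟪powerLaw q (x i) - powerLaw q a, x i - a⟫_ℝ) l (𝓝 0)) :
    Tendsto x l (𝓝 a) := by
  simp_rw [inner_powerLaw_sub_powerLaw] at h
  set g : ℝ → ℝ := fun t => t ^ (q - 2) * t
  have hg : StrictMonoOn g (Ici 0) := strictMonoOn_rpow_sub_two_mul_self hq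
  set w : ι → ℝ := fun i => ‖x i‖ ^ (q - 2) + ‖a‖ ^ (q - 2)
  set gap : ι → ℝ := fun i => ‖x i‖ * ‖a‖ - ⟪x i, a⟫_ℝ
  have hradial_nonneg : ∀ i, 0 ≤ (g ‖x i‖ - g ‖a‖) * (‖x i‖ - ‖a‖) := fun i =>
    hg.monotoneOn.sub_mul_sub_nonneg (norm_nonneg _) (norm_nonneg a)
  have hgap_nonneg : ∀ i, 0 ≤ gap i := fun i => sub_nonneg.2 (real_inner_le_norm _ _)
  have hangular_nonneg : ∀ i, 0 ≤ w i * gap i := fun i =>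
    mul_nonneg (by positivity) (hgap_nonneg i)
  have hradial : Tendsto (fun i => (g ‖x i‖ - g ‖a‖) * (‖x i‖ - ‖a‖)) l (𝓝 0) :=
    squeeze_zero hradial_nonneg (fun i => le_add_of_nonneg_right (hangular_nonneg i)) h
  have hangular : Tendsto (fun i => w i * gap i) l (𝓝 0) :=
    squeeze_zero hangular_nonneg (fun i => le_add_of_nonneg_left (hradial_nonneg i)) h
  have hnorm : Tendsto (fun i => ‖x i‖) l (𝓝 ‖a‖) :=
    tendsto_of_tendsto_mul_sub_of_strictMonoOn hg (fun i => norm_nonneg _) (norm_nonneg a) hradial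
  have hgap : Tendsto gap l (𝓝 0) := by
    rcases eq_or_ne a 0 with rfl | ha
    · simpa [gap] using tendsto_const_nhds
    have hpos : 0 < ‖a‖ ^ (q - 2) := by positivity
    refine squeeze_zero hgap_nonneg (fun i => (le_div_iff₀ hpos).2 ?_)
      (by simpa using hangular.div_const (‖a‖ ^ (q - 2)))
    nlinarith [mul_nonneg (by positivity : 0 ≤ ‖x i‖ ^ (q - 2)) (hgap_nonneg i)]
  refine tendsto_of_tendsto_norm_of_tendsto_inner hnorm ?_
  convert (hnorm.mul_const ‖a‖).sub hgap using 2
  · simp only [gap]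
    ring
  · ring

end InnerProductSpace

noncomputable def Matrix.flattenEuclidean {m n : Type*} [Fintype m] [Fintype n] :
    Matrix m n ℝ ≃L[ℝ] EuclideanSpace ℝ (m × n) :=
  ((LinearEquiv.curry ℝ ℝ m n).symm.trans
    (WithLp.linearEquiv 2 ℝ (m × n → ℝ)).symm).toContinuousLinearEquiv

@[simp]
lemma Matrix.flattenEuclidean_apply {m n : Type*} [Fintype m] [Fintype n] (A : Matrix m n ℝ)
    (p : m × n) : Matrix.flattenEuclidean A p = A p.1 p.2 := rfl

open Matrix

lemma fdot_eq_inner (A B : Matrix (Fin 3) (Fin 3) ℝ) :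
    fdot A B = ⟪flattenEuclidean A, flattenEuclidean B⟫_ℝ := by
  simp [fdot, PiLp.inner_apply, Fintype.sum_prod_type, mul_comm]

lemma fnorm_eq_norm (A : Matrix (Fin 3) (Fin 3) ℝ) : fnorm A = ‖flattenEuclidean A‖ := by
  simp [fnorm, EuclideanSpace.norm_eq, Fintype.sum_prod_type]

lemma flattenEuclidean_stress (q : ℝ) (D : Matrix (Fin 3) (Fin 3) ℝ) :
    flattenEuclidean (stress q D) = powerLaw q (flattenEuclidean D) := by
  unfold stress
  split_ifs with hD
  · simp [hD, powerLaw]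
  · simp [powerLaw, fnorm_eq_norm]

lemma continuous_stress {q : ℝ} (hq : 1 < q) : Continuous (stress q) := by
  have : stress q = flattenEuclidean.symm ∘ powerLaw q ∘ flattenEuclidean := by
    ext1 D
    simp [← flattenEuclidean_stress]
  rw [this]
  exact flattenEuclidean.symm.continuous.comp
    ((continuous_powerLaw hq).comp flattenEuclidean.continuous)

lemma tendsto_of_tendsto_fdot_stress_sub {ι : Type*} {l : Filter ι} {q : ℝ} (hq : 1 < q)
    {B : ι → Matrix (Fin 3) (Fin 3) ℝ} {A : Matrix (Fin 3) (Fin 3) ℝ}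
    (h : Tendsto (fun i => fdot (stress q (B i) - stress q A) (B i - A)) l (𝓝 0)) :
    Tendsto B l (𝓝 A) := by
  simp only [fdot_eq_inner, map_sub, flattenEuclidean_stress] at h
  simpa [Function.comp_def] using
    (flattenEuclidean.symm.continuous.tendsto _).comp (tendsto_of_tendsto_inner_powerLaw_sub hq h)

theorem stmt15_general {X : Type*} [MeasurableSpace X] (μ : Measure X)
    (q : ℝ) (hq : 1 < q)
    (A : ℕ → X → Matrix (Fin 3) (Fin 3) ℝ) (A0 : X → Matrix (Fin 3) (Fin 3) ℝ)
    (hae : ∀ᵐ x ∂μ, Filter.Tendsto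
      (fun m => fdot (stress q (A m x) - stress q (A0 x)) (A m x - A0 x))
      Filter.atTop (nhds 0)) :
    (∀ᵐ x ∂μ, Filter.Tendsto (fun m => A m x) Filter.atTop (nhds (A0 x))) ∧
    (∀ᵐ x ∂μ, Filter.Tendsto (fun m => stress q (A m x)) Filter.atTop
      (nhds (stress q (A0 x)))) := by
  have hA : ∀ᵐ x ∂μ, Tendsto (fun m => A m x) atTop (𝓝 (A0 x)) :=
    hae.mono fun x hx => tendsto_of_tendsto_fdot_stress_sub hq hx
  exact ⟨hA, hA.mono fun x hx => ((continuous_stress hq).tendsto _).comp hx⟩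

/-- Dal Maso–Murat: if the monotonicity products tend to `0` a.e., then `A_m → A` a.e.
and `S(A_m) → S(A)` a.e. -/
theorem stmt15 {X : Type*} [MeasurableSpace X] (μ : Measure X) [IsFiniteMeasure μ]
    (q : ℝ) (hq : 1 < q)
    (A : ℕ → X → Matrix (Fin 3) (Fin 3) ℝ) (A0 : X → Matrix (Fin 3) (Fin 3) ℝ)
    (hae : ∀ᵐ x ∂μ, Filter.Tendsto
      (fun m => fdot (stress q (A m x) - stress q (A0 x)) (A m x - A0 x))
      Filter.atTop (nhds 0)) :
    (∀ᵐ x ∂μ, Filter.Tendsto (fun m => A m x) Filter.atTop (nhds (A0 x))) ∧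
    (∀ᵐ x ∂μ, Filter.Tendsto (fun m => stress q (A m x)) Filter.atTop
      (nhds (stress q (A0 x)))) :=
  stmt15_general μ q hq A A0 hae
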